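/- arXiv:1804.04330 — 3 statements merged into one kernel-verified Lean document; each statement's English description precedes it below -/
import Mathlib

section
/- Let χ = Fin 3 → Fin 3 (configurations of length n = 3 with 3 colors, generalizable to any n), and define the unnormalized Ising weight w(x) = exp((1/T)·∑_{k=1}^{n-1} (if x_k = x_{k+1} then 1 else -1)). Fix a site i with 1 ≤ i ≤ n-2 (interior site, 0-indexed). For k ∈ Fin 3 let W^(k) = {x : χ | x_i = c⁽¹⁾ ∧ x_{i+1} = c⁽ᵏ⁾}. Then ∑_{x ∈ W^(1)} w(x) = exp(2/T)·∑_{x ∈ W^(2)} w(x) = exp(2/T)·∑_{x ∈ W^(3)} w(x). -/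
open Finset

/-- Unnormalized Gibbs weight of the 1-D Ising model with `N` colors on `n` sites:
`w(x) = exp((1/T) ∑_{k=1}^{n-1} (𝟙{x_k = x_{k+1}} - 𝟙{x_k ≠ x_{k+1}}))`. -/
noncomputable def isingW (N n : ℕ) (T : ℝ) (x : Fin n → Fin N) : ℝ :=
  Real.exp (1 / T * ∑ k : Fin (n - 1),
    (if x ⟨k.1, by have := k.2; omega⟩ = x ⟨k.1 + 1, by have := k.2; omega⟩
      then (1 : ℝ) else -1))

/-- Partition function of the 1-D Ising model. -/
noncomputable def isingZ (N n : ℕ) (T : ℝ) : ℝ :=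
  ∑ x : Fin n → Fin N, isingW N n T x

/-- Normalized Gibbs measure of the 1-D Ising model. -/
noncomputable def isingPi (N n : ℕ) (T : ℝ) (x : Fin n → Fin N) : ℝ :=
  isingW N n T x / isingZ N n T

/-!
Applying the transposition `(c₁ cₖ)` to the colors of all sites to the right of `i` maps `W⁽¹⁾`
bijectively onto `W⁽ᵏ⁾`. It preserves every bond except `(i, i+1)`, which turns from agreeing
into disagreeing, so each weight drops by exactly the factor `exp (2 / T)`.
-/

section Recolor

variable {α : Type*} {n : ℕ}

def recolorAfter (i : ℕ) (σ : Equiv.Perm α) : (Fin n → α) ≃ (Fin n → α) where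
  toFun x j := if (j : ℕ) ≤ i then x j else σ (x j)
  invFun x j := if (j : ℕ) ≤ i then x j else σ.symm (x j)
  left_inv x := by funext j; by_cases h : (j : ℕ) ≤ i <;> simp [h]
  right_inv x := by funext j; by_cases h : (j : ℕ) ≤ i <;> simp [h]

variable {i : ℕ} {σ : Equiv.Perm α} {x : Fin n → α} {j j' : Fin n}

@[simp]
theorem recolorAfter_apply_of_le (h : (j : ℕ) ≤ i) : recolorAfter i σ x j = x j := if_pos h

@[simp]
theorem recolorAfter_apply_of_lt (h : i < j) : recolorAfter i σ x j = σ (x j) :=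
  if_neg (Nat.not_le.mpr h)

theorem recolorAfter_apply_eq_apply_iff (h : (j : ℕ) ≤ i ↔ (j' : ℕ) ≤ i) :
    recolorAfter i σ x j = recolorAfter i σ x j' ↔ x j = x j' := by
  by_cases hj : (j : ℕ) ≤ i
  · simp [hj, h.mp hj]
  · have hj' : i < (j' : ℕ) := by omega
    simp [Nat.lt_of_not_le hj, hj']

end Recolor

theorem Fintype.sum_eq_sum_add_sub_of_forall_ne {ι M : Type*} [Fintype ι] [AddCommGroup M]
    {f g : ι → M} (j : ι) (h : ∀ k, k ≠ j → f k = g k) :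
    ∑ k, f k = ∑ k, g k + (f j - g j) := by
  have hdiff : ∑ k, (f k - g k) = f j - g j :=
    Fintype.sum_eq_single j fun k hk => sub_eq_zero.mpr (h k hk)
  rw [Finset.sum_sub_distrib] at hdiff
  rw [← hdiff, add_sub_cancel]

theorem isingW_recolorAfter {N n : ℕ} (T : ℝ) {i : ℕ} (hi : i + 1 < n) (σ : Equiv.Perm (Fin N))
    {x : Fin n → Fin N} (hx : x ⟨i, by omega⟩ = x ⟨i + 1, hi⟩)
    (hσ : σ (x ⟨i + 1, hi⟩) ≠ x ⟨i + 1, hi⟩) :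
    isingW N n T x = Real.exp (2 / T) * isingW N n T (recolorAfter i σ x) := by
  have hbond : recolorAfter i σ x ⟨i, by omega⟩ ≠ recolorAfter i σ x ⟨i + 1, hi⟩ := by
    rw [recolorAfter_apply_of_le (j := ⟨i, by omega⟩) le_rfl,
      recolorAfter_apply_of_lt (j := ⟨i + 1, hi⟩) (Nat.lt_succ_self i), hx]
    exact hσ.symm
  unfold isingW
  rw [← Real.exp_add, Fintype.sum_eq_sum_add_sub_of_forall_ne ⟨i, by omega⟩ ?off]
  case off =>
    intro k hk
    have hki : (k : ℕ) ≠ i := fun h => hk (Fin.ext h)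
    have hside : (k : ℕ) ≤ i ↔ (k : ℕ) + 1 ≤ i := by omega
    exact if_congr (recolorAfter_apply_eq_apply_iff (σ := σ) hside).symm rfl rfl
  rw [if_pos hx, if_neg hbond]
  congr 1; ring

theorem sum_isingW_filter_eq_exp_mul_sum {N n : ℕ} (T : ℝ) {i : ℕ} (hi : i + 1 < n)
    {a b : Fin N} (hab : a ≠ b) :
    ∑ x ∈ univ.filter (fun x : Fin n → Fin N => x ⟨i, by omega⟩ = a ∧ x ⟨i + 1, hi⟩ = a),
        isingW N n T x
      = Real.exp (2 / T) * ∑ x ∈ univ.filter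
          (fun x : Fin n → Fin N => x ⟨i, by omega⟩ = a ∧ x ⟨i + 1, hi⟩ = b), isingW N n T x := by
  rw [mul_sum]
  refine sum_equiv (recolorAfter i (Equiv.swap a b)) (fun x => ?_) fun x hx => ?_
  · simp [Equiv.swap_apply_eq_iff]
  · obtain ⟨hxi, hxi'⟩ := (mem_filter.mp hx).2
    exact isingW_recolorAfter T hi _ (hxi.trans hxi'.symm) (by simp [hxi', hab.symm])

/-- For the three-state 1-D Ising model and an interior site `i`
(`1 ≤ i ≤ n-2`, 0-indexed), with `W^(k) = {x | x_i = c⁽¹⁾, x_{i+1} = c⁽ᵏ⁾}`, one has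
`∑_{x ∈ W^(1)} w(x) = e^{2/T} ∑_{x ∈ W^(2)} w(x) = e^{2/T} ∑_{x ∈ W^(3)} w(x)`. -/
theorem sum_W_weights_three_state (n : ℕ) (hn : 3 ≤ n) (T : ℝ)
    (c₁ c₂ c₃ : Fin 3) (hc : c₁ ≠ c₂ ∧ c₁ ≠ c₃ ∧ c₂ ≠ c₃)
    (i : ℕ) (hi2 : i ≤ n - 2) :
    (∑ x ∈ Finset.univ.filter (fun x : Fin n → Fin 3 =>
        x ⟨i, by omega⟩ = c₁ ∧ x ⟨i + 1, by omega⟩ = c₁), isingW 3 n T x)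
      = Real.exp (2 / T) * ∑ x ∈ Finset.univ.filter (fun x : Fin n → Fin 3 =>
          x ⟨i, by omega⟩ = c₁ ∧ x ⟨i + 1, by omega⟩ = c₂), isingW 3 n T x ∧
    (∑ x ∈ Finset.univ.filter (fun x : Fin n → Fin 3 =>
        x ⟨i, by omega⟩ = c₁ ∧ x ⟨i + 1, by omega⟩ = c₁), isingW 3 n T x)
      = Real.exp (2 / T) * ∑ x ∈ Finset.univ.filter (fun x : Fin n → Fin 3 =>
          x ⟨i, by omega⟩ = c₁ ∧ x ⟨i + 1, by omega⟩ = c₃), isingW 3 n T x :=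
  have hi : i + 1 < n := by omega
  ⟨sum_isingW_filter_eq_exp_mul_sum T hi hc.1, sum_isingW_filter_eq_exp_mul_sum T hi hc.2.1⟩
end

section
/- Generalizing to N ≥ 2 colors: with π the normalized Gibbs measure on (Fin N)^n for the 1-D Ising model and i an interior site, ∑_{x : x_i = c⁽¹⁾} π(x) · exp((1/T)·(𝟙{x_{i+1} = c⁽²⁾} - 𝟙{x_{i+1} ≠ c⁽²⁾} - 𝟙{x_{i+1} = c⁽¹⁾} + 𝟙{x_{i+1} ≠ c⁽¹⁾})) = 1/N. -/
open Finset

/-- Left end of bond `k`. -/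
def finA {n : ℕ} (k : Fin (n - 1)) : Fin n := ⟨k.1, by have := k.2; omega⟩
/-- Right end of bond `k`. -/
def finB {n : ℕ} (k : Fin (n - 1)) : Fin n := ⟨k.1 + 1, by have := k.2; omega⟩

lemma isingW_eq (N n : ℕ) (T : ℝ) (x : Fin n → Fin N) :
    isingW N n T x = Real.exp (1 / T * ∑ k : Fin (n - 1),
      (if x (finA k) = x (finB k) then (1 : ℝ) else -1)) := rfl

lemma isingZ_pos (N n : ℕ) (hN : 0 < N) (T : ℝ) : 0 < isingZ N n T :=
  Finset.sum_pos (fun x _ => Real.exp_pos _) ⟨fun _ => ⟨0, hN⟩, Finset.mem_univ _⟩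

lemma isingW_comp_perm (N n : ℕ) (T : ℝ) (σ : Equiv.Perm (Fin N)) (x : Fin n → Fin N) :
    isingW N n T (fun k => σ (x k)) = isingW N n T x := by
  rw [isingW_eq, isingW_eq]
  congr 2
  exact Finset.sum_congr rfl fun k _ => by simp [σ.injective.eq_iff]

lemma sum_w_eq (N n : ℕ) (T : ℝ) (j : Fin n) (c c' : Fin N) :
    (∑ x ∈ univ.filter (fun x : Fin n → Fin N => x j = c), isingW N n T x)
    = ∑ x ∈ univ.filter (fun x : Fin n → Fin N => x j = c'), isingW N n T x := by
  apply Finset.sum_nbij' (i := fun x => fun k => Equiv.swap c c' (x k))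
    (j := fun x => fun k => Equiv.swap c c' (x k))
  · intro a ha
    simp only [mem_filter, mem_univ, true_and] at ha ⊢
    rw [ha, Equiv.swap_apply_left]
  · intro a ha
    simp only [mem_filter, mem_univ, true_and] at ha ⊢
    rw [ha, Equiv.swap_apply_right]
  · intro a _; funext k; simp
  · intro a _; funext k; simp
  · intro a _; exact (isingW_comp_perm N n T (Equiv.swap c c') a).symm

lemma sum_w_fiber (N n : ℕ) (T : ℝ) (j : Fin n) (c : Fin N) :
    (∑ x ∈ univ.filter (fun x : Fin n → Fin N => x j = c), isingW N n T x) * N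
      = isingZ N n T := by
  have h1 : isingZ N n T
      = ∑ c' : Fin N, ∑ x ∈ univ.filter (fun x : Fin n → Fin N => x j = c'), isingW N n T x := by
    rw [isingZ, ← Finset.sum_fiberwise univ (fun x => x j) (isingW N n T)]
  rw [h1, Finset.sum_congr rfl (fun c' _ => (sum_w_eq N n T j c' c)),
    Finset.sum_const, card_univ, Fintype.card_fin, nsmul_eq_mul, mul_comm]

lemma sum_helper {α : Type*} [Fintype α] [DecidableEq α] (f g : α → ℝ) (a : α) (c : ℝ)
    (h : ∀ b, b ≠ a → f b = g b) (ha : f a = g a + c) :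
    ∑ b, f b = (∑ b, g b) + c := by
  have h1 : ∀ b ∈ (univ : Finset α), f b = g b + (if b = a then c else 0) := by
    intro b _
    by_cases hb : b = a
    · subst hb; simp [ha]
    · simp [hb, h b hb]
  rw [Finset.sum_congr rfl h1, Finset.sum_add_distrib,
    Finset.sum_ite_eq' univ a fun _ => c]
  simp

lemma key_w (N n : ℕ) (T : ℝ) (c₁ c₂ : Fin N) (hc : c₁ ≠ c₂) (i : ℕ) (hi' : i < n - 1)
    (F : (Fin n → Fin N) → (Fin n → Fin N))
    (hF : F = fun x k => if k.1 ≤ i then Equiv.swap c₁ c₂ (x k) else x k)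
    (x : Fin n → Fin N) (hx : x (finA ⟨i, hi'⟩) = c₁) :
      isingW N n T x *
        Real.exp (1 / T *
          ((if x (finB ⟨i, hi'⟩) = c₂ then (1 : ℝ) else -1)
            - (if x (finB ⟨i, hi'⟩) = c₁ then (1 : ℝ) else -1)))
        = isingW N n T (F x) := by
  have hS : (∑ k : Fin (n-1), (if (F x) (finA k) = (F x) (finB k) then (1 : ℝ) else -1))
      = (∑ k : Fin (n-1), (if x (finA k) = x (finB k) then (1 : ℝ) else -1))
      + ((if x (finB ⟨i, hi'⟩) = c₂ then (1 : ℝ) else -1)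
          - (if x (finB ⟨i, hi'⟩) = c₁ then (1 : ℝ) else -1)) := by
    apply sum_helper _ _ (⟨i, hi'⟩ : Fin (n-1))
    · intro k hk
      have hki : k.1 ≠ i := fun h => hk (Fin.ext h)
      rcases lt_or_gt_of_ne hki with h | h
      · have ha : (finA k : Fin n).1 ≤ i := by simp [finA]; omega
        have hb : (finB k : Fin n).1 ≤ i := by simp [finB]; omega
        have e1 : (F x) (finA k) = Equiv.swap c₁ c₂ (x (finA k)) := by
          rw [hF]; simp only [ha, if_true]
        have e2 : (F x) (finB k) = Equiv.swap c₁ c₂ (x (finB k)) := by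
          rw [hF]; simp only [hb, if_true]
        rw [e1, e2]
        simp [(Equiv.swap c₁ c₂).injective.eq_iff]
      · have ha : ¬ ((finA k : Fin n).1 ≤ i) := by simp [finA]; omega
        have hb : ¬ ((finB k : Fin n).1 ≤ i) := by simp [finB]; omega
        have e1 : (F x) (finA k) = x (finA k) := by
          rw [hF]; simp only [ha, if_false]
        have e2 : (F x) (finB k) = x (finB k) := by
          rw [hF]; simp only [hb, if_false]
        rw [e1, e2]
    · have ha : ((finA (⟨i, hi'⟩ : Fin (n-1)) : Fin n)).1 ≤ i := le_refl i
      have hb : ¬ (((finB (⟨i, hi'⟩ : Fin (n-1)) : Fin n)).1 ≤ i) := by simp [finB]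
      have e1 : (F x) (finA ⟨i, hi'⟩) = c₂ := by
        rw [hF]; simp only [ha, if_true, hx, Equiv.swap_apply_left]
      have e2 : (F x) (finB ⟨i, hi'⟩) = x (finB ⟨i, hi'⟩) := by
        rw [hF]; simp only [hb, if_false]
      rw [e1, e2, hx]
      simp only [show (c₂ = x (finB ⟨i, hi'⟩)) = (x (finB ⟨i, hi'⟩) = c₂) from propext eq_comm,
        show (c₁ = x (finB ⟨i, hi'⟩)) = (x (finB ⟨i, hi'⟩) = c₁) from propext eq_comm]
      by_cases p2 : x (finB ⟨i, hi'⟩) = c₂ <;> by_cases p1 : x (finB ⟨i, hi'⟩) = c₁ <;>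
        simp only [p1, p2, if_true, if_false] <;>
        first
          | ring
          | exact absurd (p1.symm.trans p2) hc
  rw [isingW_eq, isingW_eq, hS, ← Real.exp_add, mul_add]

/-- For the `N`-state 1-D Ising model, an interior site `i` and distinct colors
`c⁽¹⁾ ≠ c⁽²⁾`:
`∑_{x : x_i = c⁽¹⁾} π(x) exp((1/T)(𝟙{x_{i+1}=c⁽²⁾} - 𝟙{x_{i+1}≠c⁽²⁾} - 𝟙{x_{i+1}=c⁽¹⁾} + 𝟙{x_{i+1}≠c⁽¹⁾})) = 1/N`. -/
theorem sum_pi_exp_N_state (N : ℕ) (hN : 2 ≤ N) (n : ℕ) (hn : 3 ≤ n) (T : ℝ) (hT : 0 < T)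
    (c₁ c₂ : Fin N) (hc : c₁ ≠ c₂)
    (i : ℕ) (hi1 : 1 ≤ i) (hi2 : i ≤ n - 2) :
    (∑ x ∈ Finset.univ.filter (fun x : Fin n → Fin N => x ⟨i, by omega⟩ = c₁),
      isingPi N n T x *
        Real.exp (1 / T *
          ((if x ⟨i + 1, by omega⟩ = c₂ then (1 : ℝ) else -1)
            - (if x ⟨i + 1, by omega⟩ = c₁ then (1 : ℝ) else -1)))) = 1 / (N : ℝ) := by
  have hi' : i < n - 1 := by omega
  have hZ : 0 < isingZ N n T := isingZ_pos N n (by omega) T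
  obtain ⟨F, hF⟩ : ∃ F : (Fin n → Fin N) → (Fin n → Fin N),
      F = fun x k => if k.1 ≤ i then Equiv.swap c₁ c₂ (x k) else x k := ⟨_, rfl⟩
  show (∑ x ∈ Finset.univ.filter (fun x : Fin n → Fin N => x (finA ⟨i, hi'⟩) = c₁),
      isingPi N n T x *
        Real.exp (1 / T *
          ((if x (finB ⟨i, hi'⟩) = c₂ then (1 : ℝ) else -1)
            - (if x (finB ⟨i, hi'⟩) = c₁ then (1 : ℝ) else -1)))) = 1 / (N : ℝ)
  have step1 : (∑ x ∈ Finset.univ.filter (fun x : Fin n → Fin N => x (finA ⟨i, hi'⟩) = c₁),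
      isingPi N n T x *
        Real.exp (1 / T *
          ((if x (finB ⟨i, hi'⟩) = c₂ then (1 : ℝ) else -1)
            - (if x (finB ⟨i, hi'⟩) = c₁ then (1 : ℝ) else -1))))
      = (∑ x ∈ Finset.univ.filter (fun x : Fin n → Fin N => x (finA ⟨i, hi'⟩) = c₁),
          isingW N n T (F x)) / isingZ N n T := by
    rw [Finset.sum_div]
    apply Finset.sum_congr rfl
    intro x hx
    simp only [mem_filter, mem_univ, true_and] at hx
    rw [isingPi, div_mul_eq_mul_div, key_w N n T c₁ c₂ hc i hi' F hF x hx]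
  have hmem : ∀ y : Fin n → Fin N, (F y) (finA ⟨i, hi'⟩)
      = Equiv.swap c₁ c₂ (y (finA ⟨i, hi'⟩)) := by
    intro y
    rw [hF]
    simp only [show ((finA (⟨i, hi'⟩ : Fin (n-1)) : Fin n)).1 ≤ i from le_refl i, if_true]
  have hFF : ∀ y : Fin n → Fin N, F (F y) = y := by
    intro y; funext k
    rw [hF]
    by_cases h : k.1 ≤ i <;> simp [h]
  have step2 : (∑ x ∈ Finset.univ.filter (fun x : Fin n → Fin N => x (finA ⟨i, hi'⟩) = c₁),
      isingW N n T (F x))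
      = ∑ x ∈ Finset.univ.filter (fun x : Fin n → Fin N => x (finA ⟨i, hi'⟩) = c₂),
          isingW N n T x := by
    apply Finset.sum_nbij' (i := F) (j := F)
    · intro a ha
      simp only [mem_filter, mem_univ, true_and] at ha ⊢
      rw [hmem a, ha, Equiv.swap_apply_left]
    · intro a ha
      simp only [mem_filter, mem_univ, true_and] at ha ⊢
      rw [hmem a, ha, Equiv.swap_apply_right]
    · intro a _; exact hFF a
    · intro a _; exact hFF a
    · intro a _; rfl
  rw [step1, step2]
  have h3 := sum_w_fiber N n T (finA ⟨i, hi'⟩) c₂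
  have hNne : (0:ℝ) < (N : ℝ) := by positivity
  have hNne : (N : ℝ) ≠ 0 := by positivity
  rw [div_eq_div_iff hZ.ne' hNne, one_mul, ← h3]
end

section
/- Let P be a reversible irreducible Markov kernel on a finite state space χ with stationary distribution π (π(x) > 0 for all x). Let G be the graph with edge set E = {(x,y) : P(x,y) > 0}, and for each ordered pair x ≠ y choose a path γ_{xy} in G from x to y using each edge at most once. Set κ = max over edges e of Q(e)⁻¹·∑_{γ_{xy} ∋ e} |γ_{xy}|·π(x)·π(y), where Q(x,y) = π(x)·P(x,y). Then the second-largest eigenvalue β₁ of P satisfies β₁ ≤ 1 - 1/κ. -/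
/-!
Let `φ` be an eigenfunction of `P` with eigenvalue `μ ≠ 1`. Stationarity of `π` makes `φ`
orthogonal to the constants in `L²(π)`, so `∑ π(x) π(y) (φ x - φ y)² = 2 ‖φ‖²`, while the
row sums and the eigen-equation give `∑ Q(x,y) (φ x - φ y)² = 2 (1 - μ) ‖φ‖²`. Writing
`φ y - φ x` as a telescoping sum along `γ_{xy}` and applying Cauchy–Schwarz, then exchanging
the sums over pairs and edges, bounds the first quantity by `κ` times the second, so
`1 ≤ κ (1 - μ)`.
-/

open Finset

/-- A finite list of directed edges forms a path from `x` to `y` in the graph of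
positive transitions of `P`, using each edge at most once. -/
def IsEdgePath {χ : Type*} (P : χ → χ → ℝ) (x y : χ) (L : List (χ × χ)) : Prop :=
  L ≠ [] ∧
  L.head?.map Prod.fst = some x ∧
  L.getLast?.map Prod.snd = some y ∧
  List.Chain' (fun e f => e.2 = f.1) L ∧
  (∀ e ∈ L, 0 < P e.1 e.2) ∧
  L.Nodup

theorem List.sum_map_sub_of_isChain {α G : Type*} [AddCommGroup G] (φ : α → G) :
    ∀ (L : List (α × α)) (hL : L ≠ []), L.IsChain (fun e f => e.2 = f.1) →
      (L.map fun e => φ e.2 - φ e.1).sum = φ (L.getLast hL).2 - φ (L.head hL).1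
  | [e], _, _ => by simp
  | e :: f :: L, _, hc => by
    rw [List.isChain_cons_cons] at hc
    have ih := List.sum_map_sub_of_isChain φ (f :: L) (List.cons_ne_nil f L) hc.2
    rw [List.map_cons, List.sum_cons, ih, List.getLast_cons_cons, List.head_cons, List.head_cons,
      hc.1]
    abel

namespace IsEdgePath

variable {χ : Type*} {P : χ → χ → ℝ} {x y : χ} {L : List (χ × χ)}

theorem sum_map_sub (h : IsEdgePath P x y L) (φ : χ → ℝ) :
    (L.map fun e => φ e.2 - φ e.1).sum = φ y - φ x := by
  obtain ⟨hne, hhead, hlast, hchain, -, -⟩ := h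
  rw [List.head?_eq_some_head hne, Option.map_some, Option.some_inj] at hhead
  rw [List.getLast?_eq_some_getLast hne, Option.map_some, Option.some_inj] at hlast
  rw [List.sum_map_sub_of_isChain φ L hne hchain, hhead, hlast]

variable [DecidableEq χ]

theorem sq_sub_le (h : IsEdgePath P x y L) (φ : χ → ℝ) :
    (φ x - φ y) ^ 2 ≤ L.length * ∑ e ∈ L.toFinset, (φ e.2 - φ e.1) ^ 2 := by
  have hnodup := h.2.2.2.2.2
  calc (φ x - φ y) ^ 2 = (∑ e ∈ L.toFinset, (φ e.2 - φ e.1)) ^ 2 := by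
        rw [List.sum_toFinset _ hnodup, h.sum_map_sub]; ring
    _ ≤ L.toFinset.card * ∑ e ∈ L.toFinset, (φ e.2 - φ e.1) ^ 2 := sq_sum_le_card_mul_sum_sq
    _ = L.length * ∑ e ∈ L.toFinset, (φ e.2 - φ e.1) ^ 2 := by
        rw [List.toFinset_card_of_nodup hnodup]

end IsEdgePath

section Poincare

variable {χ : Type*} [Fintype χ] [DecidableEq χ]

def pathCongestion (π : χ → ℝ) (γ : χ → χ → List (χ × χ)) (a b : χ) : ℝ :=
  ∑ x : χ, ∑ y : χ,
    (if x ≠ y ∧ (a, b) ∈ γ x y then ((γ x y).length : ℝ) * π x * π y else 0)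

variable {P : χ → χ → ℝ} {π : χ → ℝ} {γ : χ → χ → List (χ × χ)}

theorem pathCongestion_eq_zero (hγ : ∀ x y : χ, x ≠ y → IsEdgePath P x y (γ x y)) {a b : χ}
    (hab : ¬ 0 < P a b) : pathCongestion π γ a b = 0 :=
  sum_eq_zero fun x _ => sum_eq_zero fun y _ =>
    if_neg fun ⟨hxy, hmem⟩ => hab ((hγ x y hxy).2.2.2.2.1 _ hmem)

theorem mul_mul_sq_sub_le_sum_path (hπ : ∀ x, 0 ≤ π x)
    (hγ : ∀ x y : χ, x ≠ y → IsEdgePath P x y (γ x y)) (φ : χ → ℝ) (x y : χ) :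
    π x * π y * (φ x - φ y) ^ 2 ≤ ∑ a, ∑ b,
      if x ≠ y ∧ (a, b) ∈ γ x y then
        ((γ x y).length : ℝ) * π x * π y * (φ b - φ a) ^ 2 else 0 := by
  by_cases hxy : x = y
  · simp [hxy]
  calc π x * π y * (φ x - φ y) ^ 2
      ≤ π x * π y * ((γ x y).length * ∑ e ∈ (γ x y).toFinset, (φ e.2 - φ e.1) ^ 2) :=
        mul_le_mul_of_nonneg_left ((hγ x y hxy).sq_sub_le φ) (mul_nonneg (hπ x) (hπ y))
    _ = ∑ e : χ × χ, if e ∈ (γ x y).toFinset then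
          ((γ x y).length : ℝ) * π x * π y * (φ e.2 - φ e.1) ^ 2 else 0 := by
        rw [sum_ite_mem, univ_inter, mul_sum, mul_sum]
        exact sum_congr rfl fun e _ => by ring
    _ = _ := by
        rw [Fintype.sum_prod_type]
        simp only [List.mem_toFinset, hxy, ne_eq, not_false_eq_true, true_and]

theorem sum_mul_mul_sq_sub_le_sum_pathCongestion (hπ : ∀ x, 0 ≤ π x)
    (hγ : ∀ x y : χ, x ≠ y → IsEdgePath P x y (γ x y)) (φ : χ → ℝ) :
    ∑ x, ∑ y, π x * π y * (φ x - φ y) ^ 2 ≤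
      ∑ a, ∑ b, pathCongestion π γ a b * (φ b - φ a) ^ 2 := by
  calc ∑ x, ∑ y, π x * π y * (φ x - φ y) ^ 2
      ≤ ∑ x, ∑ y, ∑ a, ∑ b, if x ≠ y ∧ (a, b) ∈ γ x y then
          ((γ x y).length : ℝ) * π x * π y * (φ b - φ a) ^ 2 else 0 :=
        sum_le_sum fun x _ => sum_le_sum fun y _ => mul_mul_sq_sub_le_sum_path hπ hγ φ x y
    _ = ∑ a, ∑ b, ∑ x, ∑ y, if x ≠ y ∧ (a, b) ∈ γ x y then
          ((γ x y).length : ℝ) * π x * π y * (φ b - φ a) ^ 2 else 0 := by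
        rw [sum_comm_cycle]
        exact sum_congr rfl fun a _ => sum_comm_cycle
    _ = _ := by simp only [pathCongestion, sum_mul, ite_mul, zero_mul]

theorem pathCongestion_mul_sq_sub_le (hP : ∀ x y, 0 ≤ P x y) (hπ : ∀ x, 0 < π x)
    (hγ : ∀ x y : χ, x ≠ y → IsEdgePath P x y (γ x y)) {κ : ℝ} (hκ₀ : 0 ≤ κ)
    (hκ : ∀ a b : χ, 0 < P a b → (π a * P a b)⁻¹ * pathCongestion π γ a b ≤ κ)
    (φ : χ → ℝ) (a b : χ) :
    pathCongestion π γ a b * (φ b - φ a) ^ 2 ≤ κ * (π a * P a b * (φ a - φ b) ^ 2) := by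
  by_cases hab : 0 < P a b
  · have hQ : 0 < π a * P a b := mul_pos (hπ a) hab
    have hcong : pathCongestion π γ a b ≤ κ * (π a * P a b) :=
      (inv_mul_le_iff₀ hQ).mp (hκ a b hab) |>.trans_eq (mul_comm _ _)
    calc pathCongestion π γ a b * (φ b - φ a) ^ 2
        ≤ κ * (π a * P a b) * (φ b - φ a) ^ 2 := by gcongr
      _ = κ * (π a * P a b * (φ a - φ b) ^ 2) := by ring
  · rw [pathCongestion_eq_zero hγ hab, zero_mul]
    exact mul_nonneg hκ₀ (mul_nonneg (mul_nonneg (hπ a).le (hP a b)) (sq_nonneg _))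

theorem poincare_of_pathCongestion_le (hP : ∀ x y, 0 ≤ P x y) (hπ : ∀ x, 0 < π x)
    (hγ : ∀ x y : χ, x ≠ y → IsEdgePath P x y (γ x y)) {κ : ℝ} (hκ₀ : 0 ≤ κ)
    (hκ : ∀ a b : χ, 0 < P a b → (π a * P a b)⁻¹ * pathCongestion π γ a b ≤ κ)
    (φ : χ → ℝ) :
    ∑ x, ∑ y, π x * π y * (φ x - φ y) ^ 2 ≤ κ * ∑ x, ∑ y, π x * P x y * (φ x - φ y) ^ 2 := by
  calc ∑ x, ∑ y, π x * π y * (φ x - φ y) ^ 2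
      ≤ ∑ a, ∑ b, pathCongestion π γ a b * (φ b - φ a) ^ 2 :=
        sum_mul_mul_sq_sub_le_sum_pathCongestion (fun x => (hπ x).le) hγ φ
    _ ≤ ∑ a, ∑ b, κ * (π a * P a b * (φ a - φ b) ^ 2) :=
        sum_le_sum fun a _ => sum_le_sum fun b _ =>
          pathCongestion_mul_sq_sub_le hP hπ hγ hκ₀ hκ φ a b
    _ = κ * ∑ x, ∑ y, π x * P x y * (φ x - φ y) ^ 2 := by simp only [mul_sum]

end Poincare

section Spectral

variable {χ : Type*} [Fintype χ] {P : χ → χ → ℝ} {π : χ → ℝ}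

theorem sum_mul_eq_of_reversible (hProw : ∀ x, ∑ y, P x y = 1)
    (hrev : ∀ x y, π x * P x y = π y * P y x) (y : χ) :
    ∑ x, π x * P x y = π y := by
  simp only [hrev _ y, ← mul_sum, hProw, mul_one]

theorem sum_mul_eq_zero_of_eigen (hstat : ∀ y, ∑ x, π x * P x y = π y) {μ : ℝ} (hμ : μ ≠ 1)
    {φ : χ → ℝ} (hφ : ∀ x, ∑ y, P x y * φ y = μ * φ x) :
    ∑ x, π x * φ x = 0 := by
  have : μ * ∑ x, π x * φ x = ∑ x, π x * φ x :=
    calc μ * ∑ x, π x * φ x = ∑ x, π x * ∑ y, P x y * φ y := by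
          rw [mul_sum]
          exact sum_congr rfl fun x _ => by rw [hφ]; ring
      _ = ∑ x, ∑ y, π x * P x y * φ y := by simp only [mul_sum, mul_assoc]
      _ = ∑ x, π x * φ x := by
          rw [sum_comm]
          simp only [← sum_mul, hstat]
  by_contra hS
  exact hμ (mul_right_cancel₀ hS (this.trans (one_mul _).symm))

theorem sum_mul_mul_sq_sub_eq (hπsum : ∑ x, π x = 1) (φ : χ → ℝ) :
    ∑ x, ∑ y, π x * π y * (φ x - φ y) ^ 2 =
      2 * (∑ x, π x * φ x ^ 2 - (∑ x, π x * φ x) ^ 2) := by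
  have expand : ∀ x y, π x * π y * (φ x - φ y) ^ 2 =
      π y * (π x * φ x ^ 2) - 2 * ((π x * φ x) * (π y * φ y)) + π x * (π y * φ y ^ 2) :=
    fun x y => by ring
  simp only [expand, sum_add_distrib, sum_sub_distrib, ← mul_sum, ← sum_mul, hπsum]
  ring

theorem sum_mul_sq_sub_eq_of_stationary (hProw : ∀ x, ∑ y, P x y = 1)
    (hstat : ∀ y, ∑ x, π x * P x y = π y) (φ : χ → ℝ) :
    ∑ x, ∑ y, π x * P x y * (φ x - φ y) ^ 2 =
      2 * ∑ x, π x * φ x * (φ x - ∑ y, P x y * φ y) := by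
  have expand : ∀ x y, π x * P x y * (φ x - φ y) ^ 2 =
      π x * φ x ^ 2 * P x y - 2 * (π x * φ x * (P x y * φ y)) + π x * P x y * φ y ^ 2 :=
    fun x y => by ring
  simp only [expand, sum_add_distrib, sum_sub_distrib, ← mul_sum, hProw]
  rw [sum_comm (f := fun x y => π x * P x y * φ y ^ 2)]
  have hsq : ∀ x, π x * φ x * φ x = π x * φ x ^ 2 := fun x => by ring
  simp only [← sum_mul, hstat, mul_sub, sum_sub_distrib, hsq]
  ring

end Spectral

theorem diaconis_stroock_geometric_bound_general
    {χ : Type*} [Fintype χ] [DecidableEq χ]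
    (P : χ → χ → ℝ) (π : χ → ℝ)
    (hPnonneg : ∀ x y, 0 ≤ P x y)
    (hProw : ∀ x, ∑ y, P x y = 1)
    (hπpos : ∀ x, 0 < π x)
    (hπsum : ∑ x, π x = 1)
    (hrev : ∀ x y, π x * P x y = π y * P y x)
    (γ : χ → χ → List (χ × χ))
    (hγ : ∀ x y : χ, x ≠ y → IsEdgePath P x y (γ x y))
    (κ : ℝ) (hκpos : 0 < κ)
    (hκ : ∀ a b : χ, 0 < P a b →
      (π a * P a b)⁻¹ *
          ∑ x : χ, ∑ y : χ,
            (if x ≠ y ∧ (a, b) ∈ γ x y then ((γ x y).length : ℝ) * π x * π y else 0)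
        ≤ κ) :
    ∀ μ : ℝ, Module.End.HasEigenvalue (Matrix.toLin' (Matrix.of P)) μ → μ ≠ 1 →
      μ ≤ 1 - 1 / κ := by
  intro μ hμ hμ1
  obtain ⟨φ, hφ⟩ := hμ.exists_hasEigenvector
  have hPφ : ∀ x, ∑ y, P x y * φ y = μ * φ x := fun x => by
    simpa [Matrix.mulVec, dotProduct] using congrFun hφ.apply_eq_smul x
  have hstat := sum_mul_eq_of_reversible hProw hrev
  have hN : 0 < ∑ x, π x * φ x ^ 2 := by
    obtain ⟨x, hx⟩ := Function.ne_iff.mp hφ.2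
    exact sum_pos' (fun y _ => mul_nonneg (hπpos y).le (sq_nonneg _))
      ⟨x, mem_univ x, mul_pos (hπpos x) (pow_two_pos_of_ne_zero hx)⟩
  have hpoinc := poincare_of_pathCongestion_le hPnonneg hπpos hγ hκpos.le hκ φ
  rw [sum_mul_mul_sq_sub_eq hπsum, sum_mul_eq_zero_of_eigen hstat hμ1 hPφ,
    sum_mul_sq_sub_eq_of_stationary hProw hstat] at hpoinc
  have hdir : ∑ x, π x * φ x * (φ x - ∑ y, P x y * φ y) = (1 - μ) * ∑ x, π x * φ x ^ 2 := by
    rw [mul_sum]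
    exact sum_congr rfl fun x _ => by rw [hPφ]; ring
  rw [hdir] at hpoinc
  have hgap : 1 ≤ κ * (1 - μ) := le_of_mul_le_mul_right (by nlinarith) hN
  linarith [(div_le_iff₀' hκpos).mpr hgap]

/-- Diaconis–Stroock geometric (Poincaré) bound: for a reversible irreducible Markov
kernel `P` on a finite state space with stationary distribution `π` of full support,
and a choice of paths `γ_{xy}` between any two distinct states, if
`κ ≥ Q(e)⁻¹ ∑_{γ_{xy} ∋ e} |γ_{xy}| π(x) π(y)` for every edge `e` (with
`Q(a,b) = π(a) P(a,b)`), then every eigenvalue `μ ≠ 1` of `P` — in particular the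
second largest eigenvalue `β₁` — satisfies `μ ≤ 1 - 1/κ`. -/
theorem diaconis_stroock_geometric_bound
    {χ : Type*} [Fintype χ] [DecidableEq χ] [Nonempty χ]
    (P : χ → χ → ℝ) (π : χ → ℝ)
    (hPnonneg : ∀ x y, 0 ≤ P x y)
    (hProw : ∀ x, ∑ y, P x y = 1)
    (hπpos : ∀ x, 0 < π x)
    (hπsum : ∑ x, π x = 1)
    (hrev : ∀ x y, π x * P x y = π y * P y x)
    (hirr : ∀ x y : χ, ∃ k : ℕ, 0 < ((Matrix.of P) ^ k) x y)
    (γ : χ → χ → List (χ × χ))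
    (hγ : ∀ x y : χ, x ≠ y → IsEdgePath P x y (γ x y))
    (κ : ℝ) (hκpos : 0 < κ)
    (hκ : ∀ a b : χ, 0 < P a b →
      (π a * P a b)⁻¹ *
          ∑ x : χ, ∑ y : χ,
            (if x ≠ y ∧ (a, b) ∈ γ x y then ((γ x y).length : ℝ) * π x * π y else 0)
        ≤ κ) :
    ∀ μ : ℝ, Module.End.HasEigenvalue (Matrix.toLin' (Matrix.of P)) μ → μ ≠ 1 →
      μ ≤ 1 - 1 / κ :=
  diaconis_stroock_geometric_bound_general P π hPnonneg hProw hπpos hπsum hrev γ hγ κ hκpos hκ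
end
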